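/- In the setup of the preceding norm relation (levels U'' ⊆ U' = U ∩ τUτ⁻¹ ⊆ U, element u, compact K ⊆ H, class z, classes z_U and z_{U''}, hypotheses (i) and (ii), and τ ∈ Σ⁻¹), fix r ≥ 1 and suppose τ^{-r} U τ^{r} ⊆ Σ and τ^{-(r+1)} U'' τ^{r+1} ⊆ Σ; set V = τ^{-r} U τ^{r}, V'' = τ^{-(r+1)} U'' τ^{r+1} (so V'' ⊆ V), ξ = [τ^r]_{U,V,⋆}(z_U) ∈ M_G(V) and ξ'' = [τ^{r+1}]_{U'',V'',⋆}(z_{U''}) ∈ M_G(V''). Then pr_{V'', V, ⋆}(ξ'') = T_V(ξ), where T_V = pr_{τ⁻¹Wτ, V, ⋆} ∘ [τ]_{W, τ⁻¹Wτ, ⋆} ∘ pr^⋆_{W, V} with W = V ∩ τVτ⁻¹ is the Hecke operator of the double coset V τ⁻¹ V. -/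

import Mathlib

/-- The conjugate subgroup `γ U γ⁻¹`. -/
def conjSub {G : Type*} [Group G] (γ : G) (U : Subgroup G) : Subgroup G :=
  U.map (MulAut.conj γ).toMonoidHom

/-- A *cohomology functor* for a group `G`, with objects the subgroups satisfying the
predicate `P` (in practice: the open compact subgroups contained in an open submonoid `Σ`),
monoid of admissible twists `S` (in practice `Σ`), and coefficients in a commutative
ring `A`.  It consists of `A`-modules `M U`, contravariant pullback maps
`pull g U V : M V →ₗ M U` (for the morphism `[g] : U → V` of `𝒫(G, Σ)`, i.e. `g ∈ S` and
`g⁻¹ U g ⊆ V`) and covariant pushforward maps `push g U V : M U →ₗ M V` (for the morphism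
`[g] : U → V` of `𝒫(G, Σ⁻¹)`, i.e. `g⁻¹ ∈ S` and `g⁻¹ U g ⊆ V`), which are functorial,
depend only on the double coset `U g V`, and satisfy `[g]^⋆ = [g⁻¹]_⋆` when
`g⁻¹ U g = V`. -/
structure CohFunctor (G : Type*) [Group G] (P : Subgroup G → Prop) (S : Set G)
    (A : Type*) [CommRing A] where
  M : Subgroup G → Type*
  addCommGroup : ∀ U, AddCommGroup (M U)
  module : ∀ U, Module A (M U)
  pull : ∀ (g : G) (U V : Subgroup G), M V →ₗ[A] M U
  push : ∀ (g : G) (U V : Subgroup G), M U →ₗ[A] M V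
  pull_id : ∀ U, P U → pull 1 U U = LinearMap.id
  push_id : ∀ U, P U → push 1 U U = LinearMap.id
  pull_comp : ∀ (g h : G) (U V W : Subgroup G), P U → P V → P W →
    g ∈ S → h ∈ S → (∀ x ∈ U, g⁻¹ * x * g ∈ V) → (∀ x ∈ V, h⁻¹ * x * h ∈ W) →
    (pull g U V).comp (pull h V W) = pull (g * h) U W
  push_comp : ∀ (g h : G) (U V W : Subgroup G), P U → P V → P W →
    g⁻¹ ∈ S → h⁻¹ ∈ S → (∀ x ∈ U, g⁻¹ * x * g ∈ V) → (∀ x ∈ V, h⁻¹ * x * h ∈ W) →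
    (push h V W).comp (push g U V) = push (g * h) U W
  pull_congr : ∀ (g u v : G) (U V : Subgroup G), P U → P V → g ∈ S →
    (∀ x ∈ U, g⁻¹ * x * g ∈ V) → u ∈ U → v ∈ V → pull (u * g * v) U V = pull g U V
  push_congr : ∀ (g u v : G) (U V : Subgroup G), P U → P V → g⁻¹ ∈ S →
    (∀ x ∈ U, g⁻¹ * x * g ∈ V) → u ∈ U → v ∈ V → push (u * g * v) U V = push g U V
  pull_eq_push : ∀ (g : G) (U V : Subgroup G), P U → P V → g ∈ S →
    conjSub g⁻¹ U = V → pull g U V = push g⁻¹ V U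

attribute [instance] CohFunctor.addCommGroup CohFunctor.module

namespace CohFunctor

variable {G : Type*} [Group G] {P : Subgroup G → Prop} {S : Set G}
  {A : Type*} [CommRing A]

/-- The Cartesian (Mackey) condition: for objects `U, U' ≤ V` and any finite set `R` of
representatives of the double cosets `U\V/U'`, the composite `pr^⋆_{U,V} ∘ pr_{U',V,⋆}`
equals the sum over `γ ∈ R` of `pr_{U_γ,U,⋆} ∘ [γ]^⋆` with `U_γ = γU'γ⁻¹ ∩ U`. -/
def IsCartesian (F : CohFunctor G P S A) : Prop :=
  ∀ (U U' V : Subgroup G), P U → P U' → P V → U ≤ V → U' ≤ V →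
    ∀ R : Finset G, (↑R : Set G) ⊆ (V : Set G) →
      (∀ v ∈ V, ∃ γ ∈ R, ∃ x ∈ U, ∃ y ∈ U', v = x * γ * y) →
      (∀ γ ∈ R, ∀ γ' ∈ R, (∃ x ∈ U, ∃ y ∈ U', γ' = x * γ * y) → γ = γ') →
      (F.pull 1 U V).comp (F.push 1 U' V) =
        ∑ γ ∈ R, (F.push 1 (conjSub γ U' ⊓ U) U).comp (F.pull γ (conjSub γ U' ⊓ U) U')

/-- The Iwasawa completion `M_Iw(K) = lim_U M(U)`, the inverse limit over the objects `U`
containing the compact subgroup `K`, with respect to the pushforward maps `pr_⋆`. -/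
def Iw (F : CohFunctor G P S A) (K : Subgroup G) :
    Submodule A (∀ U : {U : Subgroup G // P U ∧ K ≤ U}, F.M U.1) where
  carrier := {f | ∀ (U V : {U : Subgroup G // P U ∧ K ≤ U}), U.1 ≤ V.1 →
      F.push 1 U.1 V.1 (f U) = f V}
  add_mem' := by
    intro f g hf hg U V h
    simp only [Pi.add_apply, map_add, hf U V h, hg U V h]
  zero_mem' := by
    intro U V h
    simp
  smul_mem' := by
    intro c f hf U V h
    simp only [Pi.smul_apply, map_smul, hf U V h]

/-- Projection from the Iwasawa completion at `K` to the value at an object `U ⊇ K`. -/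
def IwProj (F : CohFunctor G P S A) (K U : Subgroup G) (hU : P U) (hKU : K ≤ U) :
    F.Iw K →ₗ[A] F.M U :=
  (LinearMap.proj (⟨U, hU, hKU⟩ : {U : Subgroup G // P U ∧ K ≤ U})).comp (F.Iw K).subtype

/-- The pushforward `pr_⋆ : M_Iw(K₁) → M_Iw(K₂)` on Iwasawa completions, for compact
subgroups `K₁ ≤ K₂` (restriction of compatible families). -/
def IwRes (F : CohFunctor G P S A) (K₁ K₂ : Subgroup G) (h : K₁ ≤ K₂) :
    F.Iw K₁ →ₗ[A] F.Iw K₂ where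
  toFun f := ⟨fun U => f.1 ⟨U.1, U.2.1, le_trans h U.2.2⟩, fun U V hUV =>
    f.2 ⟨U.1, U.2.1, le_trans h U.2.2⟩ ⟨V.1, V.2.1, le_trans h V.2.2⟩ hUV⟩
  map_add' f g := rfl
  map_smul' c f := rfl

end CohFunctor

/-- The Hecke operator `T_U = pr_{τ⁻¹U'τ, U, ⋆} ∘ [τ]_{U', τ⁻¹U'τ, ⋆} ∘ pr^⋆_{U', U}` on
`M(U)`, where `U' = U ∩ τUτ⁻¹`; it is the operator of the double coset `U τ⁻¹ U`. -/
def heckeT {G : Type*} [Group G] {P : Subgroup G → Prop} {S : Set G}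
    {A : Type*} [CommRing A] (F : CohFunctor G P S A) (τ : G) (U : Subgroup G) :
    F.M U →ₗ[A] F.M U :=
  (F.push 1 (conjSub τ⁻¹ (U ⊓ conjSub τ U)) U).comp
    ((F.push τ (U ⊓ conjSub τ U) (conjSub τ⁻¹ (U ⊓ conjSub τ U))).comp
      (F.pull 1 (U ⊓ conjSub τ U) U))

/-- The defining property of the finite pullback `pr^⋆ : M_Iw(K) → M_Iw(K')` (for `K' ≤ K`
compact of finite index), as in Statement 1: it is compatible with the finite-level
pullbacks `pr^⋆_{V',V}` for all shrinking pairs `(V, V')` adapted to `(K, K')`. -/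
def IwFinPullSpec {G : Type*} [Group G] {P : Subgroup G → Prop} {S : Set G}
    {A : Type*} [CommRing A] (F : CohFunctor G P S A) (K K' : Subgroup G)
    (fp : F.Iw K →ₗ[A] F.Iw K') : Prop :=
  ∀ (V V' : Subgroup G) (hV : P V) (hV' : P V') (hKV : K ≤ V) (hK'V' : K' ≤ V'),
    V' ≤ V → V' ⊓ K = K' → V'.relIndex V = K'.relIndex K →
    ∀ f : F.Iw K, (fp f).1 ⟨V', hV', hK'V'⟩ = F.pull 1 V' V (f.1 ⟨V, hV, hKV⟩)

/-- A *pushforward map* `ι_⋆ : M_H → M_G` attached to the closed subgroup `Hsub ⊆ G`: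
a family of `A`-linear maps `ι_{V,⋆} : M_H(H ∩ V) → M_G(V)` for the objects `V` of
`𝒫(G, Σ)`, compatible with the pushforwards `[h]_⋆` for `h ∈ H ∩ Σ⁻¹`, and satisfying
the Cartesian (Mackey) compatibility with pullbacks along the double cosets
`U\V/(V ∩ H)`. -/
structure PushMap {G : Type*} [Group G] {PH PG : Subgroup G → Prop} {SH SG : Set G}
    {A : Type*} [CommRing A] (Hsub : Subgroup G)
    (FH : CohFunctor G PH SH A) (FG : CohFunctor G PG SG A) where
  toFun : ∀ V : Subgroup G, FH.M (Hsub ⊓ V) →ₗ[A] FG.M V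
  compat_push : ∀ h : G, h ∈ Hsub → h⁻¹ ∈ SG → h⁻¹ ∈ SH →
    ∀ V V' : Subgroup G, PG V → PG V' → (∀ x ∈ V, h⁻¹ * x * h ∈ V') →
      (FG.push h V V').comp (toFun V) =
        (toFun V').comp (FH.push h (Hsub ⊓ V) (Hsub ⊓ V'))
  compat_pull : ∀ U V : Subgroup G, PG U → PG V → U ≤ V →
    ∀ R : Finset G, (↑R : Set G) ⊆ (V : Set G) →
      (∀ v ∈ V, ∃ γ ∈ R, ∃ x ∈ U, ∃ h, h ∈ Hsub ∧ h ∈ V ∧ v = x * γ * h) →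
      (∀ γ ∈ R, ∀ γ' ∈ R, (∃ x ∈ U, ∃ h, h ∈ Hsub ∧ h ∈ V ∧ γ' = x * γ * h) → γ = γ') →
      (FG.pull 1 U V).comp (toFun V) =
        ∑ γ ∈ R, ((FG.push γ⁻¹ (conjSub γ⁻¹ U ⊓ V) U).comp
          ((toFun (conjSub γ⁻¹ U ⊓ V)).comp
            (FH.pull 1 (Hsub ⊓ (conjSub γ⁻¹ U ⊓ V)) (Hsub ⊓ V))))

/-- The class `z_U ∈ M_G(U)`: the image of `z ∈ M_{H,Iw}(K)` under the composite of the
finite pullback `M_{H,Iw}(K) → M_{H,Iw}(K ∩ uUu⁻¹)`, the pushforward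
`M_{H,Iw}(K ∩ uUu⁻¹) → M_{H,Iw}(H ∩ uUu⁻¹)`, the pushforward map
`ι_{uUu⁻¹,⋆} : M_{H,Iw}(H ∩ uUu⁻¹) → M_G(uUu⁻¹)`, and the conjugation isomorphism
`[u]_⋆ : M_G(uUu⁻¹) → M_G(U)`. -/
def pushClass {G : Type*} [Group G] {PH PG : Subgroup G → Prop} {SH SG : Set G}
    {A : Type*} [CommRing A] {Hsub : Subgroup G}
    {FH : CohFunctor G PH SH A} {FG : CohFunctor G PG SG A}
    (ι : PushMap Hsub FH FG) (u : G) (K U : Subgroup G)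
    (hX : PH (Hsub ⊓ conjSub u U))
    (hKX : K ⊓ conjSub u U ≤ Hsub ⊓ conjSub u U)
    (fp : FH.Iw K →ₗ[A] FH.Iw (K ⊓ conjSub u U)) (z : FH.Iw K) : FG.M U :=
  FG.push u (conjSub u U) U
    (ι.toFun (conjSub u U)
      (FH.IwProj (Hsub ⊓ conjSub u U) (Hsub ⊓ conjSub u U) hX le_rfl
        (FH.IwRes (K ⊓ conjSub u U) (Hsub ⊓ conjSub u U) hKX (fp z))))

/-!
The relation is first proved in the Iwasawa cohomology of `H`. By (ii),
`uUu⁻¹ = uU'u⁻¹ · (K ∩ uUu⁻¹)`, so the Mackey formula for `pr^⋆ ∘ pr_⋆` has a single term, and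
both finite pullbacks of `z` can be computed at one common level of `H`: `K W`, for `W` a small
open normal subgroup of a level containing `K` (if there is no such level, `M_{H,Iw}(K) = 0`).
Conjugating by `u` and applying `ι_⋆` gives `pr^⋆_{U',U}(z_U) = pr_{U'',U',⋆}(z_{U''})` in
`M_G(U')`. At `V = τ⁻ʳUτʳ` one has `V ∩ τVτ⁻¹ = τ⁻ʳU'τʳ`, so
`T_V ∘ [τʳ]_⋆ = [τʳ⁺¹]_⋆ ∘ pr^⋆_{U',U}`, and both sides of the claim become
`[τʳ⁺¹]_⋆ pr_{U'',U',⋆}(z_{U''})`.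
-/

section conjSub

variable {G : Type*} [Group G]

theorem mem_conjSub {g x : G} {U : Subgroup G} : x ∈ conjSub g U ↔ g⁻¹ * x * g ∈ U := by
  rw [conjSub, Subgroup.mem_map_equiv, MulAut.conj_symm_apply]

theorem conjSub_one (U : Subgroup G) : conjSub 1 U = U := by
  ext x; simp [mem_conjSub]

theorem conjSub_conjSub (g h : G) (U : Subgroup G) :
    conjSub g (conjSub h U) = conjSub (g * h) U := by
  ext x; simp only [mem_conjSub]; group

theorem conjSub_mono (g : G) {U V : Subgroup G} (h : U ≤ V) : conjSub g U ≤ conjSub g V :=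
  fun _ hx => mem_conjSub.mpr (h (mem_conjSub.mp hx))

theorem conjSub_inf (g : G) (U V : Subgroup G) :
    conjSub g (U ⊓ V) = conjSub g U ⊓ conjSub g V := by
  ext x; simp [mem_conjSub]

theorem conj_mem_of_conjSub_le {g : G} {U V : Subgroup G} (h : conjSub g⁻¹ U ≤ V) :
    ∀ x ∈ U, g⁻¹ * x * g ∈ V :=
  fun x hx => h (mem_conjSub.mpr (by group; exact hx))

theorem conj_one_mem_of_le {U V : Subgroup G} (h : U ≤ V) : ∀ x ∈ U, (1 : G)⁻¹ * x * 1 ∈ V := by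
  simpa using fun x hx => h hx

theorem conjSub_pow_succ_le (τ : G) (r : ℕ) (U : Subgroup G) :
    conjSub (τ⁻¹ ^ (r + 1)) (U ⊓ conjSub τ U) ≤ conjSub (τ⁻¹ ^ r) U :=
  (conjSub_mono _ inf_le_right).trans_eq <| by
    rw [conjSub_conjSub, pow_succ, inv_mul_cancel_right]

end conjSub

section cosets

variable {G : Type*} [Group G]

theorem forall_mem_mul_swap {X A B : Subgroup G}
    (h : ∀ v ∈ X, ∃ a ∈ A, ∃ b ∈ B, v = a * b) : ∀ v ∈ X, ∃ b ∈ B, ∃ a ∈ A, v = b * a := by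
  intro v hv
  obtain ⟨a, ha, b, hb, hab⟩ := h v⁻¹ (inv_mem hv)
  exact ⟨b⁻¹, inv_mem hb, a⁻¹, inv_mem ha, by rw [← mul_inv_rev, ← hab, inv_inv]⟩

/-- If `T' = T S'`, then `t ↦ t S'` identifies `T / (S' ∩ T)` with `T' / S'`. -/
theorem relIndex_eq_relIndex_inf_of_forall_mem_mul {T T' S' : Subgroup G} (hTT' : T ≤ T')
    (hcov : ∀ v ∈ T', ∃ t ∈ T, ∃ s ∈ S', v = t * s) :
    S'.relIndex T' = (S' ⊓ T).relIndex T := by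
  let φ : T ⧸ (S' ⊓ T).subgroupOf T → T' ⧸ S'.subgroupOf T' :=
    Quotient.map' (Subgroup.inclusion hTT') fun a b hab => by
      rw [QuotientGroup.leftRel_apply, Subgroup.mem_subgroupOf] at hab ⊢
      exact hab.1
  have hφ : Function.Bijective φ := by
    refine ⟨fun a b hab => ?_, fun q => ?_⟩
    · induction a using QuotientGroup.induction_on with | H a =>
      induction b using QuotientGroup.induction_on with | H b =>
      have hab' := Quotient.exact' hab
      rw [QuotientGroup.leftRel_apply, Subgroup.mem_subgroupOf] at hab'
      refine Quotient.sound' ?_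
      rw [QuotientGroup.leftRel_apply, Subgroup.mem_subgroupOf]
      exact ⟨hab', (a⁻¹ * b).2⟩
    · induction q using QuotientGroup.induction_on with | H v =>
      obtain ⟨t, ht, s, hs, hv⟩ := hcov v v.2
      refine ⟨QuotientGroup.mk ⟨t, ht⟩, Quotient.sound' ?_⟩
      rw [QuotientGroup.leftRel_apply, Subgroup.mem_subgroupOf]
      simpa [hv] using hs
  exact (Nat.card_congr (Equiv.ofBijective φ hφ)).symm

theorem exists_mul_of_mem_conjSub {u : G} {K U U' : Subgroup G} {R : Finset G}
    (hRmem : ∀ γ ∈ R, u * γ * u⁻¹ ∈ K ∧ γ ∈ U) (hRcover : ∀ v ∈ U, ∃ γ ∈ R, v * γ⁻¹ ∈ U') :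
    ∀ v ∈ conjSub u U, ∃ x ∈ conjSub u U', ∃ n ∈ K ⊓ conjSub u U, v = x * n := by
  intro v hv
  obtain ⟨γ, hγR, hγ⟩ := hRcover _ (mem_conjSub.mp hv)
  refine ⟨v * (u * γ * u⁻¹)⁻¹, mem_conjSub.mpr ?_, u * γ * u⁻¹,
    ⟨(hRmem γ hγR).1, mem_conjSub.mpr ?_⟩, by group⟩
  · convert hγ using 1; group
  · convert (hRmem γ hγR).2 using 1; group

end cosets

namespace CohFunctor

variable {G : Type*} [Group G] {P : Subgroup G → Prop} {S : Set G} {A : Type*} [CommRing A]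
  (F : CohFunctor G P S A) {U V W : Subgroup G}

theorem push_push {g h : G} (hU : P U) (hV : P V) (hW : P W) (hg : g⁻¹ ∈ S) (hh : h⁻¹ ∈ S)
    (hUV : ∀ x ∈ U, g⁻¹ * x * g ∈ V) (hVW : ∀ x ∈ V, h⁻¹ * x * h ∈ W) (m : F.M U) :
    F.push h V W (F.push g U V m) = F.push (g * h) U W m :=
  LinearMap.congr_fun (F.push_comp g h U V W hU hV hW hg hh hUV hVW) m

theorem pull_pull {g h : G} (hU : P U) (hV : P V) (hW : P W) (hg : g ∈ S) (hh : h ∈ S)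
    (hUV : ∀ x ∈ U, g⁻¹ * x * g ∈ V) (hVW : ∀ x ∈ V, h⁻¹ * x * h ∈ W) (m : F.M W) :
    F.pull g U V (F.pull h V W m) = F.pull (g * h) U W m :=
  LinearMap.congr_fun (F.pull_comp g h U V W hU hV hW hg hh hUV hVW) m

theorem pull_one_push_conj {g : G} {X X' Y Y' : Subgroup G} (hS : (1 : G) ∈ S) (hg : g⁻¹ ∈ S)
    (hX : P X) (hX' : P X') (hY : P Y) (hY' : P Y') (hX'X : X' ≤ X)
    (hXY : conjSub g⁻¹ X = Y) (hXY' : conjSub g⁻¹ X' = Y') (m : F.M X) :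
    F.pull 1 Y' Y (F.push g X Y m) = F.push g X' Y' (F.pull 1 X' X m) := by
  have conj_eq : ∀ {Z Z'}, conjSub g⁻¹ Z = Z' → conjSub g⁻¹⁻¹ Z' = Z := fun h => by
    rw [← h, conjSub_conjSub, inv_inv, mul_inv_cancel, conjSub_one]
  have conj_mem : ∀ {Z Z'}, conjSub g⁻¹ Z = Z' → ∀ y ∈ Z', g⁻¹⁻¹ * y * g⁻¹ ∈ Z := fun h y hy => by
    rw [← h, mem_conjSub] at hy; exact hy
  rw [← inv_inv g, ← F.pull_eq_push g⁻¹ Y X hY hX hg (conj_eq hXY),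
    ← F.pull_eq_push g⁻¹ Y' X' hY' hX' hg (conj_eq hXY'),
    F.pull_pull hY' hY hX hS hg (conj_one_mem_of_le (hXY' ▸ hXY ▸ conjSub_mono _ hX'X))
      (conj_mem hXY),
    F.pull_pull hY' hX' hX hg hS (conj_mem hXY') (conj_one_mem_of_le hX'X), one_mul, mul_one]

variable {F} in
theorem IsCartesian.pull_one_push_one (hF : F.IsCartesian) {U' : Subgroup G} (hU : P U)
    (hU' : P U') (hV : P V) (hUV : U ≤ V) (hU'V : U' ≤ V)
    (hcov : ∀ v ∈ V, ∃ x ∈ U, ∃ y ∈ U', v = x * y) (m : F.M U') :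
    F.pull 1 U V (F.push 1 U' V m) = F.push 1 (U' ⊓ U) U (F.pull 1 (U' ⊓ U) U' m) := by
  have h := hF U U' V hU hU' hV hUV hU'V {1} (by simp [one_mem V])
    (fun v hv => by
      obtain ⟨x, hx, y, hy, rfl⟩ := hcov v hv
      exact ⟨1, Finset.mem_singleton_self 1, x, hx, y, hy, by rw [mul_one]⟩)
    (by simp)
  rw [Finset.sum_singleton, conjSub_one] at h
  exact LinearMap.congr_fun h m

theorem Iw_eq_zero_of_isEmpty {K : Subgroup G} (h : IsEmpty {U : Subgroup G // P U ∧ K ≤ U})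
    (z : F.Iw K) : z = 0 :=
  Subtype.ext (Subsingleton.elim _ _)

end CohFunctor

section IwFinPull

variable {G : Type*} [Group G] {P : Subgroup G → Prop} {S : Set G} {A : Type*} [CommRing A]

/-- The hypotheses of `IwFinPullSpec` on a pair of levels `(V, V')`. -/
def IsAdapted (P : Subgroup G → Prop) (K K' V V' : Subgroup G) : Prop :=
  P V ∧ P V' ∧ K ≤ V ∧ K' ≤ V' ∧ V' ≤ V ∧ V' ⊓ K = K' ∧ V'.relIndex V = K'.relIndex K

theorem IwFinPullSpec.apply_eq {F : CohFunctor G P S A} {K K' V V' Y : Subgroup G}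
    {fp : F.Iw K →ₗ[A] F.Iw K'} (hfp : IwFinPullSpec F K K' fp) (hVV' : IsAdapted P K K' V V')
    (hY : P Y) (hK'Y : K' ≤ Y) (hV'Y : V' ≤ Y) (z : F.Iw K) :
    (fp z).1 ⟨Y, hY, hK'Y⟩ =
      F.push 1 V' Y (F.pull 1 V' V (z.1 ⟨V, hVV'.1, hVV'.2.2.1⟩)) := by
  obtain ⟨hV, hV', hKV, hK'V', hV'V, hV'K, hidx⟩ := hVV'
  rw [← hfp V V' hV hV' hKV hK'V' hV'V hV'K hidx z]
  exact ((fp z).2 ⟨V', hV', hK'V'⟩ ⟨Y, hY, hK'Y⟩ hV'Y).symm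

theorem IsAdapted.inf {K V V' Q Q' : Subgroup G} (h : IsAdapted P K (K ⊓ Q) V V')
    (hP : P (V' ⊓ Q')) (hV'Q : V' ≤ Q) (hQ'Q : Q' ≤ Q)
    (hcov : ∀ v ∈ Q, ∃ x ∈ Q', ∃ n ∈ K ⊓ Q, v = x * n) :
    IsAdapted P K (K ⊓ Q') V (V' ⊓ Q') := by
  obtain ⟨hV, -, hKV, hKQV', hV'V, hV'K, hidx⟩ := h
  have hmeet : V' ⊓ Q' ⊓ (K ⊓ Q) = K ⊓ Q' := by
    rw [inf_right_comm, inf_eq_right.mpr hKQV', inf_assoc, inf_eq_right.mpr hQ'Q]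
  have hcov' : ∀ v ∈ V', ∃ n ∈ K ⊓ Q, ∃ x ∈ V' ⊓ Q', v = n * x := by
    refine forall_mem_mul_swap fun v hv => ?_
    obtain ⟨x, hx, n, hn, rfl⟩ := hcov v (hV'Q hv)
    exact ⟨x, ⟨by simpa using mul_mem hv (inv_mem (hKQV' hn)), hx⟩, n, hn, rfl⟩
  refine ⟨hV, hP, hKV, le_inf ((inf_le_inf_left K hQ'Q).trans hKQV') inf_le_right,
    inf_le_left.trans hV'V, ?_, ?_⟩
  · rw [inf_right_comm, hV'K, inf_assoc, inf_eq_right.mpr hQ'Q]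
  · rw [← Subgroup.relIndex_mul_relIndex _ _ _ inf_le_left hV'V,
      relIndex_eq_relIndex_inf_of_forall_mem_mul hKQV' hcov', hmeet, hidx,
      Subgroup.relIndex_mul_relIndex _ _ _ (inf_le_inf_left K hQ'Q) inf_le_left]

end IwFinPull

namespace PushMap

variable {G : Type*} [Group G] {PH PG : Subgroup G → Prop} {SH SG : Set G}
  {A : Type*} [CommRing A] {Hsub : Subgroup G}
  {FH : CohFunctor G PH SH A} {FG : CohFunctor G PG SG A} (ι : PushMap Hsub FH FG)
  {U V : Subgroup G}

theorem pull_one_toFun (hU : PG U) (hV : PG V) (hUV : U ≤ V)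
    (hcov : ∀ v ∈ V, ∃ x ∈ U, ∃ h ∈ Hsub ⊓ V, v = x * h) (m : FH.M (Hsub ⊓ V)) :
    FG.pull 1 U V (ι.toFun V m) = ι.toFun U (FH.pull 1 (Hsub ⊓ U) (Hsub ⊓ V) m) := by
  have h := ι.compat_pull U V hU hV hUV {1} (by simp [one_mem V])
    (fun v hv => by
      obtain ⟨x, hx, h, ⟨hhH, hhV⟩, rfl⟩ := hcov v hv
      exact ⟨1, Finset.mem_singleton_self 1, x, hx, h, hhH, hhV, by rw [mul_one]⟩)
    (by simp)
  rw [Finset.sum_singleton, inv_one, conjSub_one, inf_eq_left.mpr hUV, FG.push_id U hU,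
    LinearMap.id_comp] at h
  exact LinearMap.congr_fun h m

theorem push_one_toFun (hSG : (1 : G) ∈ SG) (hSH : (1 : G) ∈ SH) (hU : PG U) (hV : PG V)
    (hUV : U ≤ V) (m : FH.M (Hsub ⊓ U)) :
    FG.push 1 U V (ι.toFun U m) = ι.toFun V (FH.push 1 (Hsub ⊓ U) (Hsub ⊓ V) m) :=
  LinearMap.congr_fun (ι.compat_push 1 (one_mem Hsub) (by simpa using hSG) (by simpa using hSH)
    U V hU hV (conj_one_mem_of_le hUV)) m

end PushMap

theorem pushClass_eq {G : Type*} [Group G] {A : Type*} [CommRing A] {PH PG : Subgroup G → Prop}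
    {SH SG : Set G} {H : Subgroup G}
    {FH : CohFunctor G PH SH A} {FG : CohFunctor G PG SG A} (ι : PushMap H FH FG) (u : G)
    (K U : Subgroup G) (hX : PH (H ⊓ conjSub u U)) (hKX : K ⊓ conjSub u U ≤ H ⊓ conjSub u U)
    (fp : FH.Iw K →ₗ[A] FH.Iw (K ⊓ conjSub u U)) (z : FH.Iw K) :
    pushClass ι u K U hX hKX fp z =
      FG.push u (conjSub u U) U (ι.toFun (conjSub u U) ((fp z).1 ⟨H ⊓ conjSub u U, hX, hKX⟩)) :=
  rfl

section Levels

open Pointwise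

variable {G : Type*} [Group G] [TopologicalSpace G]

/-- The objects of `𝒫(G, Σ)`. -/
def IsLevel (Sig : Set G) (U : Subgroup G) : Prop :=
  IsOpen (U : Set G) ∧ IsCompact (U : Set G) ∧ (U : Set G) ⊆ Sig

/-- The objects of `𝒫(H, Σ ∩ H)`: compact subgroups of `H` which are open in `H`. -/
def IsRelLevel (Sig : Set G) (H X : Subgroup G) : Prop :=
  X ≤ H ∧ IsCompact (X : Set G) ∧ (∃ O : Set G, IsOpen O ∧ (X : Set G) = O ∩ (H : Set G)) ∧
    (X : Set G) ⊆ Sig ∩ (H : Set G)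

variable [IsTopologicalGroup G] {Sig : Set G} {H U V X T W V₀ Q : Subgroup G}

theorem isOpen_conjSub (g : G) (h : IsOpen (U : Set G)) : IsOpen (conjSub g U : Set G) := by
  have : (conjSub g U : Set G) = (fun x => g⁻¹ * x * g) ⁻¹' U := Set.ext fun _ => mem_conjSub
  exact this ▸ h.preimage (by fun_prop)

theorem isCompact_conjSub (g : G) (h : IsCompact (U : Set G)) :
    IsCompact (conjSub g U : Set G) := by
  have : (conjSub g U : Set G) = (fun x => g * x * g⁻¹) '' U := by
    rw [conjSub, Subgroup.coe_map]; rfl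
  exact this ▸ h.image (by fun_prop)

theorem IsLevel.conjSub (g : G) (hU : IsLevel Sig U) (h : (conjSub g U : Set G) ⊆ Sig) :
    IsLevel Sig (conjSub g U) :=
  ⟨isOpen_conjSub g hU.1, isCompact_conjSub g hU.2.1, h⟩

theorem IsLevel.inf (hU : IsLevel Sig U) (hV : IsOpen (V : Set G)) : IsLevel Sig (U ⊓ V) :=
  ⟨hU.1.inter hV, hU.2.1.inter_right (V.isClosed_of_isOpen hV),
    Set.inter_subset_left.trans hU.2.2⟩

theorem IsRelLevel.inf (hX : IsRelLevel Sig H X) (hQ : IsOpen (Q : Set G)) :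
    IsRelLevel Sig H (X ⊓ Q) := by
  obtain ⟨hXH, hXc, ⟨O, hO, hXO⟩, hXSig⟩ := hX
  refine ⟨inf_le_left.trans hXH, hXc.inter_right (Q.isClosed_of_isOpen hQ),
    ⟨O ∩ Q, hO.inter hQ, ?_⟩, Set.inter_subset_left.trans hXSig⟩
  rw [Subgroup.coe_inf, hXO, Set.inter_right_comm]

theorem isRelLevel_sup (hV₀ : IsRelLevel Sig H V₀) (hTV₀ : T ≤ V₀) (hT : IsCompact (T : Set G))
    (hWV₀ : W ≤ V₀) (hW : IsRelLevel Sig H W) (hTW : T ≤ Subgroup.normalizer (W : Set G)) :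
    IsRelLevel Sig H (T ⊔ W) := by
  obtain ⟨-, hWc, ⟨O, hO, hWO⟩, -⟩ := hW
  have hTH : (T : Set G) ⊆ H := fun x hx => hV₀.1 (hTV₀ hx)
  have hTW_eq := Subgroup.coe_mul_of_left_le_normalizer_right T W hTW
  refine ⟨sup_le (hTV₀.trans hV₀.1) (hWV₀.trans hV₀.1), hTW_eq ▸ hT.mul hWc,
    ⟨(T : Set G) * O, hO.mul_left, ?_⟩, fun x hx => hV₀.2.2.2 (sup_le hTV₀ hWV₀ hx)⟩
  rw [hTW_eq, hWO]
  ext x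
  constructor
  · rintro ⟨t, ht, o, ⟨hoO, hoH⟩, rfl⟩
    exact ⟨⟨t, ht, o, hoO, rfl⟩, mul_mem (hTH ht) hoH⟩
  · rintro ⟨⟨t, ht, o, hoO, rfl⟩, hx⟩
    refine ⟨t, ht, o, ⟨hoO, ?_⟩, rfl⟩
    simpa using mul_mem (inv_mem (hTH ht)) hx

/-- `W` is an open normal subgroup of the compact group `V₀` inside the clopen set `V₀ ∩ Q`. -/
theorem exists_isRelLevel_le_normalizer (hV₀ : IsRelLevel Sig H V₀) (hQ : IsOpen (Q : Set G)) :
    ∃ W : Subgroup G, W ≤ V₀ ∧ W ≤ Q ∧ IsRelLevel Sig H W ∧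
      V₀ ≤ Subgroup.normalizer (W : Set G) := by
  obtain ⟨hV₀H, hV₀c, ⟨O₀, hO₀, hV₀O⟩, hV₀Sig⟩ := hV₀
  have : CompactSpace V₀ := isCompact_iff_compactSpace.mp hV₀c
  obtain ⟨N, hNQ⟩ := IsTopologicalGroup.exist_openNormalSubgroup_sub_clopen_nhds_of_one
    (W := Subtype.val ⁻¹' (Q : Set G))
    ⟨(Q.isClosed_of_isOpen hQ).preimage continuous_subtype_val,
      hQ.preimage continuous_subtype_val⟩ (show ((1 : V₀) : G) ∈ Q from one_mem Q)
  obtain ⟨O₁, hO₁, hNO₁⟩ := isOpen_induced_iff.mp N.toOpenSubgroup.isOpen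
  have hcoe : (N.toSubgroup.map V₀.subtype : Set G) = Subtype.val '' ((↑) ⁻¹' O₁ : Set V₀) := by
    rw [hNO₁, Subgroup.coe_map]; rfl
  refine ⟨N.toSubgroup.map V₀.subtype, Subgroup.map_subtype_le _,
    fun x ⟨y, hy, hyx⟩ => hyx ▸ hNQ hy, ⟨(Subgroup.map_subtype_le _).trans hV₀H, ?_, ?_, ?_⟩, ?_⟩
  · rw [Subgroup.coe_map]
    exact ((N.toSubgroup.isClosed_of_isOpen N.isOpen').isCompact).image continuous_subtype_val
  · refine ⟨O₁ ∩ O₀, hO₁.inter hO₀, ?_⟩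
    rw [hcoe, Set.image_preimage_eq_inter_range, Subtype.range_coe_subtype,
      SetLike.setOfPred_mem_eq, hV₀O, Set.inter_assoc]
  · exact fun x hx => hV₀Sig (Subgroup.map_subtype_le _ hx)
  · have := Subgroup.le_normalizer_map (H := N.toSubgroup) V₀.subtype
    rwa [Subgroup.normalizer_eq_top, ← MonoidHom.range_eq_map, Subgroup.range_subtype] at this

end Levels

section NormRelation

open Pointwise

variable {G : Type*} [Group G] [TopologicalSpace G] [IsTopologicalGroup G] {A : Type*} [CommRing A]

theorem exists_isAdapted {Sig : Set G} {H K Q V₀ : Subgroup G} (hV₀ : IsRelLevel Sig H V₀)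
    (hKV₀ : K ≤ V₀) (hK : IsCompact (K : Set G)) (hQ : IsOpen (Q : Set G)) :
    ∃ V V' : Subgroup G, V' ≤ Q ∧ IsAdapted (IsRelLevel Sig H) K (K ⊓ Q) V V' := by
  obtain ⟨W, hWV₀, hWQ, hW, hV₀W⟩ := exists_isRelLevel_le_normalizer hV₀ hQ
  have hKQV₀ : K ⊓ Q ≤ V₀ := inf_le_left.trans hKV₀
  have hV'Q : K ⊓ Q ⊔ W ≤ Q := sup_le inf_le_right hWQ
  have hV'K : (K ⊓ Q ⊔ W) ⊓ K = K ⊓ Q :=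
    le_antisymm (fun x hx => ⟨hx.2, hV'Q hx.1⟩) (le_inf le_sup_left inf_le_left)
  have hKW : ((K ⊔ W : Subgroup G) : Set G) = (K : Set G) * W :=
    Subgroup.coe_mul_of_left_le_normalizer_right K W (hKV₀.trans hV₀W)
  refine ⟨K ⊔ W, K ⊓ Q ⊔ W, hV'Q, isRelLevel_sup hV₀ hKV₀ hK hWV₀ hW (hKV₀.trans hV₀W),
    isRelLevel_sup hV₀ hKQV₀ (hK.inter_right (Q.isClosed_of_isOpen hQ)) hWV₀ hW
      (hKQV₀.trans hV₀W), le_sup_left, le_sup_left, sup_le_sup_right inf_le_left W, hV'K, ?_⟩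
  rw [relIndex_eq_relIndex_inf_of_forall_mem_mul le_sup_left, hV'K]
  intro v hv
  obtain ⟨k, hk, w, hw, rfl⟩ : v ∈ (K : Set G) * W := hKW ▸ hv
  exact ⟨k, hk, w, le_sup_right (a := K ⊓ Q) hw, rfl⟩

/-- Both sides are computed at one level `V ⊇ K` to which both finite pullbacks are adapted. -/
theorem pull_finPull_eq_push_finPull {Sig S : Set G} {H : Subgroup G}
    {F : CohFunctor G (IsRelLevel Sig H) S A} (hF : F.IsCartesian) (hS : (1 : G) ∈ S)
    {K Q Q' Q'' : Subgroup G} (hKH : K ≤ H) (hK : IsCompact (K : Set G))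
    (hQ : IsOpen (Q : Set G)) (hQ' : IsOpen (Q' : Set G)) (hQ'Q : Q' ≤ Q) (hQ''Q' : Q'' ≤ Q')
    (hKQ'' : K ⊓ Q'' = K ⊓ Q') (hcov : ∀ v ∈ Q, ∃ x ∈ Q', ∃ n ∈ K ⊓ Q, v = x * n)
    (hX : IsRelLevel Sig H (H ⊓ Q)) (hX'' : IsRelLevel Sig H (H ⊓ Q''))
    {fp : F.Iw K →ₗ[A] F.Iw (K ⊓ Q)} (hfp : IwFinPullSpec F K (K ⊓ Q) fp)
    {fp'' : F.Iw K →ₗ[A] F.Iw (K ⊓ Q'')} (hfp'' : IwFinPullSpec F K (K ⊓ Q'') fp'')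
    (z : F.Iw K) :
    F.pull 1 (H ⊓ Q') (H ⊓ Q) ((fp z).1 ⟨H ⊓ Q, hX, inf_le_inf_right Q hKH⟩) =
      F.push 1 (H ⊓ Q'') (H ⊓ Q') ((fp'' z).1 ⟨H ⊓ Q'', hX'', inf_le_inf_right Q'' hKH⟩) := by
  by_cases hlev : IsEmpty {V : Subgroup G // IsRelLevel Sig H V ∧ K ≤ V}
  · simp [F.Iw_eq_zero_of_isEmpty hlev z]
  obtain ⟨⟨V₀, hV₀, hKV₀⟩⟩ := not_isEmpty_iff.mp hlev
  obtain ⟨V, V', hV'Q, hVV'⟩ := exists_isAdapted hV₀ hKV₀ hK hQ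
  have hV'H : V' ≤ H := hVV'.2.1.1
  have hKQV' : K ⊓ Q ≤ V' := hVV'.2.2.2.1
  have hX' : IsRelLevel Sig H (H ⊓ Q') := by
    simpa only [inf_assoc, inf_eq_right.mpr hQ'Q] using hX.inf hQ'
  have hVV'' : IsAdapted (IsRelLevel Sig H) K (K ⊓ Q'') V (V' ⊓ (H ⊓ Q')) := by
    rw [hKQ'', ← inf_assoc, inf_eq_left.mpr hV'H]
    exact hVV'.inf (hVV'.2.1.inf hQ') hV'Q hQ'Q hcov
  have hcovX : ∀ v ∈ H ⊓ Q, ∃ x ∈ H ⊓ Q', ∃ y ∈ V', v = x * y := fun v hv => by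
    obtain ⟨hvH, hvQ⟩ := Subgroup.mem_inf.mp hv
    obtain ⟨x, hx, n, hn, rfl⟩ := hcov v hvQ
    exact ⟨x, ⟨by simpa using mul_mem hvH (inv_mem (hKH hn.1)), hx⟩, n, hKQV' hn, rfl⟩
  set zV : F.M V := z.1 ⟨V, hVV'.1, hVV'.2.2.1⟩
  calc F.pull 1 (H ⊓ Q') (H ⊓ Q) ((fp z).1 ⟨H ⊓ Q, hX, inf_le_inf_right Q hKH⟩)
      = F.pull 1 (H ⊓ Q') (H ⊓ Q) (F.push 1 V' (H ⊓ Q) (F.pull 1 V' V zV)) := by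
        rw [hfp.apply_eq hVV' hX (inf_le_inf_right Q hKH) (le_inf hV'H hV'Q) z]
    _ = F.push 1 (V' ⊓ (H ⊓ Q')) (H ⊓ Q') (F.pull 1 (V' ⊓ (H ⊓ Q')) V' (F.pull 1 V' V zV)) :=
        hF.pull_one_push_one hX' hVV'.2.1 hX (inf_le_inf_left H hQ'Q) (le_inf hV'H hV'Q) hcovX _
    _ = F.push 1 (V' ⊓ (H ⊓ Q')) (H ⊓ Q') (F.pull 1 (V' ⊓ (H ⊓ Q')) V zV) := by
        rw [F.pull_pull hVV''.2.1 hVV'.2.1 hVV'.1 hS hS (conj_one_mem_of_le inf_le_left)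
          (conj_one_mem_of_le hVV'.2.2.2.2.1), one_mul]
    _ = (fp'' z).1 ⟨H ⊓ Q', hX', inf_le_inf hKH hQ''Q'⟩ :=
        (hfp''.apply_eq hVV'' hX' (inf_le_inf hKH hQ''Q') inf_le_right z).symm
    _ = F.push 1 (H ⊓ Q'') (H ⊓ Q') ((fp'' z).1 ⟨H ⊓ Q'', hX'', inf_le_inf_right Q'' hKH⟩) :=
        ((fp'' z).2 ⟨H ⊓ Q'', hX'', inf_le_inf_right Q'' hKH⟩ ⟨H ⊓ Q', hX', inf_le_inf hKH hQ''Q'⟩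
          (inf_le_inf_left H hQ''Q')).symm

end NormRelation

section Conjugated

variable {G : Type*} [Group G] [TopologicalSpace G] [IsTopologicalGroup G] {A : Type*} [CommRing A]
  {Sig : Submonoid G}

theorem pull_pushClass_eq_push_pushClass {H : Subgroup G}
    {FH : CohFunctor G (IsRelLevel Sig H) (Sig ∩ H) A} {FG : CohFunctor G (IsLevel Sig) Sig A}
    (hFH : FH.IsCartesian) (ι : PushMap H FH FG) {u : G} (huinv : u⁻¹ ∈ Sig)
    {K U U' U'' : Subgroup G} (hKH : K ≤ H) (hK : IsCompact (K : Set G))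
    (hU : IsLevel Sig U) (hU' : IsLevel Sig U') (hU'' : IsLevel Sig U'')
    (hU''U' : U'' ≤ U') (hU'U : U' ≤ U)
    (hconjU : (conjSub u U : Set G) ⊆ Sig) (hconjU'' : (conjSub u U'' : Set G) ⊆ Sig)
    (hX : IsRelLevel Sig H (H ⊓ conjSub u U)) (hX'' : IsRelLevel Sig H (H ⊓ conjSub u U''))
    {fp : FH.Iw K →ₗ[A] FH.Iw (K ⊓ conjSub u U)} (hfp : IwFinPullSpec FH K _ fp)
    {fp'' : FH.Iw K →ₗ[A] FH.Iw (K ⊓ conjSub u U'')} (hfp'' : IwFinPullSpec FH K _ fp'')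
    (hi : K ⊓ conjSub u U'' = K ⊓ conjSub u U')
    (hcov : ∀ v ∈ conjSub u U, ∃ x ∈ conjSub u U', ∃ n ∈ K ⊓ conjSub u U, v = x * n)
    (z : FH.Iw K) :
    FG.pull 1 U' U (pushClass ι u K U hX (inf_le_inf_right _ hKH) fp z) =
      FG.push 1 U'' U' (pushClass ι u K U'' hX'' (inf_le_inf_right _ hKH) fp'' z) := by
  have hQ'Q : conjSub u U' ≤ conjSub u U := conjSub_mono u hU'U
  have hQ''Q' : conjSub u U'' ≤ conjSub u U' := conjSub_mono u hU''U'
  have hQ := hU.conjSub u hconjU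
  have hQ' := hU'.conjSub u fun x hx => hconjU (hQ'Q hx)
  have hQ'' := hU''.conjSub u hconjU''
  have hconj : ∀ X, conjSub u⁻¹ (conjSub u X) = X := fun X => by
    rw [conjSub_conjSub, inv_mul_cancel, conjSub_one]
  have hcovι : ∀ v ∈ conjSub u U, ∃ x ∈ conjSub u U', ∃ h ∈ H ⊓ conjSub u U, v = x * h :=
    fun v hv => by
      obtain ⟨x, hx, n, hn, rfl⟩ := hcov v hv
      exact ⟨x, hx, n, inf_le_inf_right _ hKH hn, rfl⟩
  have hS1 : (1 : G)⁻¹ ∈ (Sig : Set G) := by simp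
  rw [pushClass_eq, pushClass_eq,
    FG.pull_one_push_conj Sig.one_mem huinv hQ hQ' hU hU' hQ'Q (hconj U) (hconj U'),
    ι.pull_one_toFun hQ' hQ hQ'Q hcovι,
    pull_finPull_eq_push_finPull hFH ⟨Sig.one_mem, H.one_mem⟩ hKH hK hQ.1 hQ'.1 hQ'Q hQ''Q' hi
      hcov hX hX'' hfp hfp'' z,
    ← ι.push_one_toFun Sig.one_mem ⟨Sig.one_mem, H.one_mem⟩ hQ'' hQ' hQ''Q',
    FG.push_push hQ'' hQ' hU' hS1 huinv (conj_one_mem_of_le hQ''Q') fun _ => mem_conjSub.mp,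
    FG.push_push hQ'' hU'' hU' huinv hS1 (fun _ => mem_conjSub.mp) (conj_one_mem_of_le hU''U'),
    one_mul, mul_one]

theorem heckeT_push_pow {F : CohFunctor G (IsLevel Sig) Sig A} {τ : G} (hτ : τ⁻¹ ∈ Sig)
    {U : Subgroup G} (hU : IsLevel Sig U) (r : ℕ) (hVSig : (conjSub (τ⁻¹ ^ r) U : Set G) ⊆ Sig)
    (a : F.M U) :
    heckeT F τ (conjSub (τ⁻¹ ^ r) U) (F.push (τ ^ r) U (conjSub (τ⁻¹ ^ r) U) a) =
      F.push (τ ^ (r + 1)) (U ⊓ conjSub τ U) (conjSub (τ⁻¹ ^ r) U)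
        (F.pull 1 (U ⊓ conjSub τ U) U a) := by
  have hinf : conjSub (τ⁻¹ ^ r) U ⊓ conjSub τ (conjSub (τ⁻¹ ^ r) U) =
      conjSub (τ⁻¹ ^ r) (U ⊓ conjSub τ U) := by
    rw [conjSub_inf, conjSub_conjSub, conjSub_conjSub,
      ((Commute.refl τ).inv_right.pow_right r).eq]
  have hconjW : conjSub τ⁻¹ (conjSub (τ⁻¹ ^ r) (U ⊓ conjSub τ U)) =
      conjSub (τ⁻¹ ^ (r + 1)) (U ⊓ conjSub τ U) := by
    rw [conjSub_conjSub, ← pow_succ']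
  have hpow : ∀ n, (τ ^ n)⁻¹ ∈ Sig := fun n => by rw [← inv_pow]; exact pow_mem hτ n
  have hconj : ∀ n X, conjSub (τ ^ n)⁻¹ X = conjSub (τ⁻¹ ^ n) X := fun n X => by rw [inv_pow]
  have hU' := hU.inf (isOpen_conjSub τ hU.1)
  have hV := hU.conjSub _ hVSig
  have hW₁V := conjSub_pow_succ_le τ r U
  have hWV : conjSub (τ⁻¹ ^ r) (U ⊓ conjSub τ U) ≤ conjSub (τ⁻¹ ^ r) U :=
    conjSub_mono _ inf_le_left
  have hW := hU'.conjSub (τ⁻¹ ^ r) fun x hx => hVSig (hWV hx)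
  have hW₁ := hU'.conjSub (τ⁻¹ ^ (r + 1)) fun x hx => hVSig (hW₁V hx)
  simp only [heckeT, LinearMap.comp_apply]
  rw [hinf, hconjW, F.pull_one_push_conj Sig.one_mem (hpow r) hU hU' hV hW inf_le_left
      (hconj r U) (hconj r _),
    F.push_push hU' hW hW₁ (hpow r) (by simpa using hτ)
      (conj_mem_of_conjSub_le (hconj r _).le) (conj_mem_of_conjSub_le hconjW.le),
    ← pow_succ, F.push_push hU' hW₁ hV (hpow (r + 1)) (by simp)
      (conj_mem_of_conjSub_le (hconj (r + 1) _).le) (conj_one_mem_of_le hW₁V), mul_one]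

theorem push_pow_succ_eq_heckeT {F : CohFunctor G (IsLevel Sig) Sig A} {τ : G}
    (hτ : τ⁻¹ ∈ Sig) {U U'' : Subgroup G} (hU : IsLevel Sig U) (hU'' : IsLevel Sig U'')
    (hU''U' : U'' ≤ U ⊓ conjSub τ U) (r : ℕ) (hVSig : (conjSub (τ⁻¹ ^ r) U : Set G) ⊆ Sig)
    (hV''Sig : (conjSub (τ⁻¹ ^ (r + 1)) U'' : Set G) ⊆ Sig)
    (hV''V : conjSub (τ⁻¹ ^ (r + 1)) U'' ≤ conjSub (τ⁻¹ ^ r) U) (a : F.M U) (b : F.M U'')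
    (h : F.pull 1 (U ⊓ conjSub τ U) U a = F.push 1 U'' (U ⊓ conjSub τ U) b) :
    F.push 1 (conjSub (τ⁻¹ ^ (r + 1)) U'') (conjSub (τ⁻¹ ^ r) U)
        (F.push (τ ^ (r + 1)) U'' (conjSub (τ⁻¹ ^ (r + 1)) U'') b) =
      heckeT F τ (conjSub (τ⁻¹ ^ r) U) (F.push (τ ^ r) U (conjSub (τ⁻¹ ^ r) U) a) := by
  have hpow : (τ ^ (r + 1))⁻¹ ∈ Sig := by rw [← inv_pow]; exact pow_mem hτ _
  have hS1 : (1 : G)⁻¹ ∈ (Sig : Set G) := by simp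
  have hconj : ∀ X, conjSub (τ ^ (r + 1))⁻¹ X = conjSub (τ⁻¹ ^ (r + 1)) X := fun X => by
    rw [inv_pow]
  rw [heckeT_push_pow hτ hU r hVSig, h,
    F.push_push hU'' (hU.inf (isOpen_conjSub τ hU.1)) (hU.conjSub _ hVSig) hS1 hpow
      (conj_one_mem_of_le hU''U')
      (conj_mem_of_conjSub_le ((hconj _).trans_le (conjSub_pow_succ_le τ r U))),
    F.push_push hU'' (hU''.conjSub _ hV''Sig) (hU.conjSub _ hVSig) hpow hS1
      (conj_mem_of_conjSub_le (hconj _).le) (conj_one_mem_of_le hV''V), one_mul, mul_one]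

end Conjugated

theorem stmt_9_general {G : Type*} [Group G] [TopologicalSpace G] [IsTopologicalGroup G]
    {A : Type*} [CommRing A]
    (Sig : Submonoid G)
    (Hsub : Subgroup G)
    (FH : CohFunctor G
      (fun X => X ≤ Hsub ∧ IsCompact (X : Set G) ∧
        (∃ O : Set G, IsOpen O ∧ (X : Set G) = O ∩ (Hsub : Set G)) ∧
        (X : Set G) ⊆ (Sig : Set G) ∩ (Hsub : Set G))
      ((Sig : Set G) ∩ (Hsub : Set G)) A)
    (FG : CohFunctor G
      (fun U => IsOpen (U : Set G) ∧ IsCompact (U : Set G) ∧ (U : Set G) ⊆ (Sig : Set G))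
      (Sig : Set G) A)
    (hFH : FH.IsCartesian)
    (ι : PushMap Hsub FH FG)
    (u : G) (huinv : u⁻¹ ∈ Sig)
    (K : Subgroup G) (hKH : K ≤ Hsub) (hKcpt : IsCompact (K : Set G))
    (z : FH.Iw K)
    (τ : G) (hτ : τ⁻¹ ∈ Sig)
    -- the three levels U'' ⊆ U' = U ∩ τUτ⁻¹ ⊆ U
    (U U' U'' : Subgroup G)
    (hU : IsOpen (U : Set G) ∧ IsCompact (U : Set G) ∧ (U : Set G) ⊆ (Sig : Set G))
    (hU' : IsOpen (U' : Set G) ∧ IsCompact (U' : Set G) ∧ (U' : Set G) ⊆ (Sig : Set G))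
    (hU'' : IsOpen (U'' : Set G) ∧ IsCompact (U'' : Set G) ∧ (U'' : Set G) ⊆ (Sig : Set G))
    (hU''U' : U'' ≤ U') (hU'U : U' ≤ U)
    (hU'eq : U' = U ⊓ conjSub τ U)
    (hconjU : ((conjSub u U : Subgroup G) : Set G) ⊆ (Sig : Set G))
    (hconjU'' : ((conjSub u U'' : Subgroup G) : Set G) ⊆ (Sig : Set G))
    (hXU : (Hsub ⊓ conjSub u U) ≤ Hsub ∧ IsCompact ((Hsub ⊓ conjSub u U : Subgroup G) : Set G) ∧
      (∃ O : Set G, IsOpen O ∧ ((Hsub ⊓ conjSub u U : Subgroup G) : Set G) = O ∩ (Hsub : Set G)) ∧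
      ((Hsub ⊓ conjSub u U : Subgroup G) : Set G) ⊆ (Sig : Set G) ∩ (Hsub : Set G))
    (hXU'' : (Hsub ⊓ conjSub u U'') ≤ Hsub ∧ IsCompact ((Hsub ⊓ conjSub u U'' : Subgroup G) : Set G) ∧
      (∃ O : Set G, IsOpen O ∧ ((Hsub ⊓ conjSub u U'' : Subgroup G) : Set G) = O ∩ (Hsub : Set G)) ∧
      ((Hsub ⊓ conjSub u U'' : Subgroup G) : Set G) ⊆ (Sig : Set G) ∩ (Hsub : Set G))
    -- the finite pullback maps on Iwasawa cohomology (unique, by Statement 1)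
    (fpU : FH.Iw K →ₗ[A] FH.Iw (K ⊓ conjSub u U))
    (hfpU : IwFinPullSpec FH K (K ⊓ conjSub u U) fpU)
    (fpU'' : FH.Iw K →ₗ[A] FH.Iw (K ⊓ conjSub u U''))
    (hfpU'' : IwFinPullSpec FH K (K ⊓ conjSub u U'') fpU'')
    -- hypothesis (i)
    (hi : K ⊓ conjSub u U'' = K ⊓ conjSub u U')
    -- hypothesis (ii)
    (R : Finset G) (hRmem : ∀ γ ∈ R, u * γ * u⁻¹ ∈ K ∧ γ ∈ U)
    (hRcover : ∀ v ∈ U, ∃! γ, γ ∈ R ∧ v * γ⁻¹ ∈ U')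
    -- the conjugated levels V = τ^{-r} U τ^r and V'' = τ^{-(r+1)} U'' τ^{r+1}
    (r : ℕ)
    (hVSig : ((conjSub (τ⁻¹ ^ r) U : Subgroup G) : Set G) ⊆ (Sig : Set G))
    (hV''Sig : ((conjSub (τ⁻¹ ^ (r + 1)) U'' : Subgroup G) : Set G) ⊆ (Sig : Set G))
    (hV''V : conjSub (τ⁻¹ ^ (r + 1)) U'' ≤ conjSub (τ⁻¹ ^ r) U) :
    FG.push 1 (conjSub (τ⁻¹ ^ (r + 1)) U'') (conjSub (τ⁻¹ ^ r) U)
        (FG.push (τ ^ (r + 1)) U'' (conjSub (τ⁻¹ ^ (r + 1)) U'')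
          (pushClass ι u K U'' hXU'' (inf_le_inf_right _ hKH) fpU'' z)) =
      heckeT FG τ (conjSub (τ⁻¹ ^ r) U)
        (FG.push (τ ^ r) U (conjSub (τ⁻¹ ^ r) U)
          (pushClass ι u K U hXU (inf_le_inf_right _ hKH) fpU z)) := by
  subst hU'eq
  exact push_pow_succ_eq_heckeT (F := FG) hτ hU hU'' hU''U' r hVSig hV''Sig hV''V _ _ <|
    pull_pushClass_eq_push_pushClass hFH ι huinv hKH hKcpt hU hU' hU'' hU''U' hU'U hconjU
      hconjU'' hXU hXU'' hfpU hfpU'' hi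
      (exists_mul_of_mem_conjSub hRmem fun v hv => (hRcover v hv).exists) z

/-- vertical norm-compatibility at the conjugated levels `V_r`.  In the
setup of Statement 8 (levels `U'' ⊆ U' = U ∩ τUτ⁻¹ ⊆ U`, element `u`, compact `K ⊆ H`,
class `z ∈ M_{H,Iw}(K)`, classes `z_U`, `z_{U''}`, hypotheses (i), (ii), and `τ ∈ Σ⁻¹`),
fix `r ≥ 1` with `τ^{-r} U τ^{r} ⊆ Σ` and `τ^{-(r+1)} U'' τ^{r+1} ⊆ Σ`, and set
`V = τ^{-r} U τ^{r}`, `V'' = τ^{-(r+1)} U'' τ^{r+1}` (so `V'' ⊆ V`),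
`ξ = [τ^r]_⋆(z_U) ∈ M_G(V)` and `ξ'' = [τ^{r+1}]_⋆(z_{U''}) ∈ M_G(V'')`.  Then
`pr_{V'',V,⋆}(ξ'') = T_V(ξ)`, where `T_V` is the Hecke operator of the double coset
`V τ⁻¹ V`. -/
theorem stmt_9 {G : Type*} [Group G] [TopologicalSpace G] [IsTopologicalGroup G]
    [LocallyCompactSpace G] [T2Space G] [TotallyDisconnectedSpace G]
    {A : Type*} [CommRing A]
    (Sig : Submonoid G) (hSig : IsOpen (Sig : Set G))
    (Hsub : Subgroup G) (hHcl : IsClosed (Hsub : Set G))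
    (FH : CohFunctor G
      (fun X => X ≤ Hsub ∧ IsCompact (X : Set G) ∧
        (∃ O : Set G, IsOpen O ∧ (X : Set G) = O ∩ (Hsub : Set G)) ∧
        (X : Set G) ⊆ (Sig : Set G) ∩ (Hsub : Set G))
      ((Sig : Set G) ∩ (Hsub : Set G)) A)
    (FG : CohFunctor G
      (fun U => IsOpen (U : Set G) ∧ IsCompact (U : Set G) ∧ (U : Set G) ⊆ (Sig : Set G))
      (Sig : Set G) A)
    (hFH : FH.IsCartesian) (hFG : FG.IsCartesian)
    (ι : PushMap Hsub FH FG)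
    (u : G) (hu : u ∈ Sig) (huinv : u⁻¹ ∈ Sig)
    (K : Subgroup G) (hKH : K ≤ Hsub) (hKcpt : IsCompact (K : Set G))
    (z : FH.Iw K)
    (τ : G) (hτ : τ⁻¹ ∈ Sig)
    -- the three levels U'' ⊆ U' = U ∩ τUτ⁻¹ ⊆ U
    (U U' U'' : Subgroup G)
    (hU : IsOpen (U : Set G) ∧ IsCompact (U : Set G) ∧ (U : Set G) ⊆ (Sig : Set G))
    (hU' : IsOpen (U' : Set G) ∧ IsCompact (U' : Set G) ∧ (U' : Set G) ⊆ (Sig : Set G))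
    (hU'' : IsOpen (U'' : Set G) ∧ IsCompact (U'' : Set G) ∧ (U'' : Set G) ⊆ (Sig : Set G))
    (hU''U' : U'' ≤ U') (hU'U : U' ≤ U)
    (hU'eq : U' = U ⊓ conjSub τ U)
    (hU''τ : ∀ x ∈ U'', τ⁻¹ * x * τ ∈ U)
    (hconjU : ((conjSub u U : Subgroup G) : Set G) ⊆ (Sig : Set G))
    (hconjU'' : ((conjSub u U'' : Subgroup G) : Set G) ⊆ (Sig : Set G))
    (hfinU : (K ⊓ conjSub u U).relIndex K ≠ 0)
    (hfinU'' : (K ⊓ conjSub u U'').relIndex K ≠ 0)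
    (hXU : (Hsub ⊓ conjSub u U) ≤ Hsub ∧ IsCompact ((Hsub ⊓ conjSub u U : Subgroup G) : Set G) ∧
      (∃ O : Set G, IsOpen O ∧ ((Hsub ⊓ conjSub u U : Subgroup G) : Set G) = O ∩ (Hsub : Set G)) ∧
      ((Hsub ⊓ conjSub u U : Subgroup G) : Set G) ⊆ (Sig : Set G) ∩ (Hsub : Set G))
    (hXU'' : (Hsub ⊓ conjSub u U'') ≤ Hsub ∧ IsCompact ((Hsub ⊓ conjSub u U'' : Subgroup G) : Set G) ∧
      (∃ O : Set G, IsOpen O ∧ ((Hsub ⊓ conjSub u U'' : Subgroup G) : Set G) = O ∩ (Hsub : Set G)) ∧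
      ((Hsub ⊓ conjSub u U'' : Subgroup G) : Set G) ⊆ (Sig : Set G) ∩ (Hsub : Set G))
    -- the finite pullback maps on Iwasawa cohomology (unique, by Statement 1)
    (fpU : FH.Iw K →ₗ[A] FH.Iw (K ⊓ conjSub u U))
    (hfpU : IwFinPullSpec FH K (K ⊓ conjSub u U) fpU)
    (fpU'' : FH.Iw K →ₗ[A] FH.Iw (K ⊓ conjSub u U''))
    (hfpU'' : IwFinPullSpec FH K (K ⊓ conjSub u U'') fpU'')
    -- hypothesis (i)
    (hi : K ⊓ conjSub u U'' = K ⊓ conjSub u U')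
    -- hypothesis (ii)
    (R : Finset G) (hRmem : ∀ γ ∈ R, u * γ * u⁻¹ ∈ K ∧ γ ∈ U)
    (hRcover : ∀ v ∈ U, ∃! γ, γ ∈ R ∧ v * γ⁻¹ ∈ U')
    (hindex : (K ⊓ conjSub u U').relIndex (K ⊓ conjSub u U) = U'.relIndex U)
    -- the conjugated levels V = τ^{-r} U τ^r and V'' = τ^{-(r+1)} U'' τ^{r+1}
    (r : ℕ) (hr : 1 ≤ r)
    (hVSig : ((conjSub (τ⁻¹ ^ r) U : Subgroup G) : Set G) ⊆ (Sig : Set G))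
    (hV''Sig : ((conjSub (τ⁻¹ ^ (r + 1)) U'' : Subgroup G) : Set G) ⊆ (Sig : Set G))
    (hV''V : conjSub (τ⁻¹ ^ (r + 1)) U'' ≤ conjSub (τ⁻¹ ^ r) U) :
    FG.push 1 (conjSub (τ⁻¹ ^ (r + 1)) U'') (conjSub (τ⁻¹ ^ r) U)
        (FG.push (τ ^ (r + 1)) U'' (conjSub (τ⁻¹ ^ (r + 1)) U'')
          (pushClass ι u K U'' hXU'' (inf_le_inf_right _ hKH) fpU'' z)) =
      heckeT FG τ (conjSub (τ⁻¹ ^ r) U)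
        (FG.push (τ ^ r) U (conjSub (τ⁻¹ ^ r) U)
          (pushClass ι u K U hXU (inf_le_inf_right _ hKH) fpU z)) :=
  stmt_9_general Sig Hsub FH FG hFH ι u huinv K hKH hKcpt z τ hτ U U' U'' hU hU' hU'' hU''U' hU'U
    hU'eq hconjU hconjU'' hXU hXU'' fpU hfpU fpU'' hfpU'' hi R hRmem hRcover r hVSig hV''Sig hV''V
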